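/- arXiv:1111.0851 — 2 statements merged into one kernel-verified Lean document; each statement's English description precedes it below -/
import Mathlib

section
/- Let ω : Ω → ℝ be a C² function on a domain Ω ⊂ ℝ² satisfying Δω = 2 sinh(2ω), and suppose |ω(w)| ≤ K₀/cosh(d(w)) whenever d(w) > 1, where d(w) is the Euclidean distance from w to ∂Ω. Then there exists a constant δ > 0 (depending only on K₀ and the constant in the interior gradient estimate for the Poisson equation) such that |∇ω(w₀)| < δ e^{-d(w₀)} for every w₀ ∈ Ω with d(w₀) > 2. -/
/-!
Interior gradient estimate via the first Fourier mode on circles. For `u` of class `C²` put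
`g(ρ) = ∫₀^{2π} u(c + ρe^{iθ}) e^{-iθ} dθ`. Writing `Δ` in polar coordinates and integrating the
angular part by parts twice gives the Euler equation `ρ²g'' + ρg' - g = ρ²f`, with `f` the first
mode of `Δu`; that is, `(ρ²g' - ρg)' = ρ²f`, so `‖ρ²g' - ρg‖ ≤ 2π sup|Δu| ρ³/3` and
`‖(g/ρ)'‖ ≤ 2π sup|Δu|/3`. Since `g(0) = 0` and `|g'(0)| = π|∇u(c)|`, integrating `(g/ρ)'` over
`(0, R]` yields `|∇u(c)| ≤ 2 sup|u|/R + 2R sup|Δu|/3` (sup over the closed disc of radius `R`).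

For the sinh-Gordon solution take `R = 1` around `w₀`: there `|ω| ≤ K₀/cosh(d(w₀) - 1)`, which is
`O(e^{-d(w₀)})`, and `|Δω| = |2 sinh 2ω| ≤ 4 cosh(2K₀)|ω|`.
-/

open Metric

/-- The Euclidean Laplacian of a function `ω : ℂ → ℝ` (identifying `ℝ² ≅ ℂ`). -/
noncomputable def euclideanLap (ω : ℂ → ℝ) (z : ℂ) : ℝ :=
  fderiv ℝ (fun w => fderiv ℝ ω w 1) z 1 +
    fderiv ℝ (fun w => fderiv ℝ ω w Complex.I) z Complex.I

open Complex intervalIntegral Function ComplexConjugate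
open scoped Real

theorem hasDerivAt_intervalIntegral_of_continuous {E : Type*} [NormedAddCommGroup E]
    [NormedSpace ℝ E] {F F' : ℝ → ℝ → E} {a b : ℝ} (hF : Continuous (uncurry F))
    (hF' : Continuous (uncurry F')) (hderiv : ∀ x t, HasDerivAt (F · t) (F' x t) x) (x₀ : ℝ) :
    HasDerivAt (fun x => ∫ t in a..b, F x t) (∫ t in a..b, F' x₀ t) x₀ := by
  obtain ⟨C, hC⟩ := ((isCompact_closedBall x₀ 1).prod (isCompact_uIcc (a := a) (b := b)))
    |>.exists_bound_of_continuousOn hF'.continuousOn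
  refine (intervalIntegral.hasDerivAt_integral_of_dominated_loc_of_deriv_le (bound := fun _ => C)
    (closedBall_mem_nhds x₀ one_pos)
    (.of_forall fun x => (hF.comp (Continuous.prodMk_right x)).aestronglyMeasurable)
    ((hF.comp (Continuous.prodMk_right x₀)).intervalIntegrable a b)
    (hF'.comp (Continuous.prodMk_right x₀)).aestronglyMeasurable
    (.of_forall fun t ht x hx => hC (x, t) ⟨hx, Set.uIoc_subset_uIcc ht⟩)
    intervalIntegrable_const (.of_forall fun t _ x _ => hderiv x t)).2

noncomputable def firstMode (F : ℝ → ℝ) : ℂ :=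
  ∫ θ in (0)..(2 * π), (F θ : ℂ) * cexp (-(θ * I))

theorem hasDerivAt_firstMode {F F' : ℝ → ℝ → ℝ} (hF : Continuous (uncurry F))
    (hF' : Continuous (uncurry F')) (hderiv : ∀ ρ θ, HasDerivAt (F · θ) (F' ρ θ) ρ) (ρ : ℝ) :
    HasDerivAt (fun ρ => firstMode (F ρ)) (firstMode (F' ρ)) ρ :=
  hasDerivAt_intervalIntegral_of_continuous (by fun_prop) (by fun_prop)
    (fun ρ θ => (hderiv ρ θ).ofReal_comp.mul_const _) ρ

theorem norm_firstMode_le {F : ℝ → ℝ} {C : ℝ} (hF : ∀ θ, |F θ| ≤ C) :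
    ‖firstMode F‖ ≤ 2 * π * C := by
  have := norm_integral_le_of_norm_le_const (a := 0) (b := 2 * π)
    (f := fun θ => (F θ : ℂ) * cexp (-(θ * I))) (C := C) fun θ _ => by
      simpa [Complex.norm_exp] using hF θ
  rwa [sub_zero, abs_of_pos Real.two_pi_pos, mul_comm C] at this

theorem firstMode_add {F G : ℝ → ℝ} (hF : Continuous F) (hG : Continuous G) :
    firstMode (fun θ => F θ + G θ) = firstMode F + firstMode G := by
  simp only [firstMode, ofReal_add, add_mul]
  exact integral_add ((by fun_prop : Continuous _).intervalIntegrable _ _)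
    ((by fun_prop : Continuous _).intervalIntegrable _ _)

theorem firstMode_const_mul (a : ℝ) (F : ℝ → ℝ) :
    firstMode (fun θ => a * F θ) = a • firstMode F := by
  simp only [firstMode, ← intervalIntegral.integral_smul, ofReal_mul, real_smul, mul_assoc]

theorem firstMode_eq_neg_of_hasDerivAt {F F' F'' : ℝ → ℝ} (hF : ∀ θ, HasDerivAt F (F' θ) θ)
    (hF' : ∀ θ, HasDerivAt F' (F'' θ) θ) (hF'' : Continuous F'')
    (hFp : Periodic F (2 * π)) (hF'p : Periodic F' (2 * π)) :
    firstMode F'' = -firstMode F := by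
  have hFc : Continuous F := continuous_iff_continuousAt.2 fun θ => (hF θ).continuousAt
  have he : ∀ θ : ℝ, HasDerivAt (fun θ : ℝ => cexp (-(θ * I))) (-I * cexp (-(θ * I))) θ := by
    intro θ
    refine ((hasDerivAt_id θ).ofReal_comp.mul_const I).fun_neg.cexp.congr_deriv ?_
    simp [mul_comm]
  have hprim : ∀ θ : ℝ, HasDerivAt (fun θ : ℝ => ((F' θ : ℂ) + I * F θ) * cexp (-(θ * I)))
      ((F'' θ : ℂ) * cexp (-(θ * I)) + (F θ : ℂ) * cexp (-(θ * I))) θ := by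
    intro θ
    refine (((hF' θ).ofReal_comp.fun_add ((hF θ).ofReal_comp.const_mul I)).fun_mul
      (he θ)).congr_deriv ?_
    linear_combination (-(F θ : ℂ) * cexp (-(θ * I))) * I_mul_I
  have hftc := integral_eq_sub_of_hasDerivAt (a := 0) (b := 2 * π) (fun θ _ => hprim θ)
    ((by fun_prop : Continuous _).intervalIntegrable _ _)
  have hperiod : cexp (-(((2 * π : ℝ) : ℂ) * I)) = cexp (-(((0 : ℝ) : ℂ) * I)) := by
    rw [ofReal_mul, ofReal_ofNat, exp_neg, exp_two_pi_mul_I]; simp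
  have hF2π : F (2 * π) = F 0 := by simpa using hFp 0
  have hF'2π : F' (2 * π) = F' 0 := by simpa using hF'p 0
  rw [integral_add ((by fun_prop : Continuous _).intervalIntegrable _ _)
    ((by fun_prop : Continuous _).intervalIntegrable _ _), hperiod, hF2π, hF'2π, sub_self] at hftc
  exact eq_neg_of_add_eq_zero_left hftc

theorem integral_exp_neg_int_mul_I {n : ℤ} (hn : n ≠ 0) :
    ∫ θ in (0)..(2 * π), cexp (-(n * θ * I)) = 0 := by
  have hc : -(n * I) ≠ 0 := by simp [hn]
  have key := integral_exp_mul_complex (a := 0) (b := 2 * π) hc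
  have hper : cexp (-(n * I) * ↑(2 * π)) = 1 :=
    Complex.exp_eq_one_iff.2 ⟨-n, by push_cast; ring⟩
  simp only [ofReal_zero, mul_zero, Complex.exp_zero, hper, sub_self, zero_div] at key
  rw [← key]
  congr 1 with θ
  ring_nf

theorem firstMode_const (a : ℝ) : firstMode (fun _ => a) = 0 := by
  have h := integral_exp_neg_int_mul_I (n := 1) one_ne_zero
  simp only [Int.cast_one, one_mul] at h
  rw [firstMode, intervalIntegral.integral_const_mul, h, mul_zero]

theorem firstMode_clm_exp (L : ℂ →L[ℝ] ℝ) :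
    firstMode (fun θ => L (cexp (θ * I))) = π * conj ((InnerProductSpace.toDual ℝ ℂ).symm L) := by
  set y := (InnerProductSpace.toDual ℝ ℂ).symm L
  have hpt : ∀ θ : ℝ, (L (cexp (θ * I)) : ℂ) * cexp (-(θ * I))
      = conj y / 2 + y / 2 * cexp (-((2 : ℤ) * θ * I)) := by
    intro θ
    rw [← InnerProductSpace.toDual_symm_apply, Complex.inner, Complex.re_eq_add_conj]
    simp only [map_mul, conj_conj, ← exp_conj, conj_ofReal, conj_I]
    have hinv : cexp (θ * I) * cexp (-(θ * I)) = 1 := by rw [← exp_add]; simp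
    have hsq : cexp (-((2 : ℤ) * θ * I)) = cexp (-(θ * I)) * cexp (-(θ * I)) := by
      rw [← exp_add]; push_cast; ring_nf
    rw [hsq, show (θ : ℂ) * -I = -(θ * I) by ring]
    linear_combination (conj y / 2) * hinv
  simp_rw [firstMode, hpt]
  rw [integral_add, integral_const, intervalIntegral.integral_const_mul,
    integral_exp_neg_int_mul_I two_ne_zero]
  · rw [sub_zero, mul_zero, add_zero, real_smul]
    push_cast
    ring
  · exact intervalIntegrable_const
  · exact (continuous_const.mul (by fun_prop)).intervalIntegrable _ _

theorem norm_firstMode_clm_exp (L : ℂ →L[ℝ] ℝ) :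
    ‖firstMode (fun θ => L (cexp (θ * I)))‖ = π * ‖L‖ := by
  rw [firstMode_clm_exp, norm_mul, Complex.norm_conj, LinearIsometryEquiv.norm_map,
    Complex.norm_real, Real.norm_of_nonneg Real.pi_pos.le]

theorem hasDerivAt_circleMap_radius (c : ℂ) (ρ θ : ℝ) :
    HasDerivAt (fun r => circleMap c r θ) (cexp (θ * I)) ρ := by
  simpa [circleMap] using ((hasDerivAt_id ρ).ofReal_comp.mul_const (cexp (θ * I))).const_add c

theorem bilin_exp_add_bilin_exp_mul_I (H : ℂ →L[ℝ] ℂ →L[ℝ] ℝ) (θ : ℝ) :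
    H (cexp (θ * I)) (cexp (θ * I)) + H (cexp (θ * I) * I) (cexp (θ * I) * I) = H 1 1 + H I I := by
  have he : cexp (θ * I) = Real.cos θ • (1 : ℂ) + Real.sin θ • I := by
    simp [real_smul, ← exp_mul_I]
  have heI : cexp (θ * I) * I = (-Real.sin θ) • (1 : ℂ) + Real.cos θ • I := by
    rw [he]; simp only [real_smul]; push_cast; ring_nf; rw [I_sq]; ring
  rw [heI, he]
  simp only [map_add, map_smul, add_apply, smul_apply, smul_eq_mul]
  linear_combination (H 1 1 + H I I) * Real.sin_sq_add_cos_sq θ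

theorem euclideanLap_eq_fderiv_fderiv {u : ℂ → ℝ} (hu : ContDiff ℝ 2 u) (z : ℂ) :
    euclideanLap u z = fderiv ℝ (fderiv ℝ u) z 1 1 + fderiv ℝ (fderiv ℝ u) z I I := by
  have hD : HasFDerivAt (fderiv ℝ u) (fderiv ℝ (fderiv ℝ u) z) z :=
    ((hu.fderiv_right (m := 1) le_rfl).differentiable one_ne_zero z).hasFDerivAt
  simp only [euclideanLap, (hD.clm_apply (hasFDerivAt_const 1 z)).fderiv,
    (hD.clm_apply (hasFDerivAt_const I z)).fderiv]
  simp

section CircleModes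

variable {u : ℂ → ℝ} (c : ℂ)

theorem hasDerivAt_firstMode_comp_circleMap (hu : ContDiff ℝ 2 u) (ρ : ℝ) :
    HasDerivAt (fun r => firstMode fun θ => u (circleMap c r θ))
      (firstMode fun θ => fderiv ℝ u (circleMap c ρ θ) (cexp (θ * I))) ρ := by
  have hDu : Continuous (fderiv ℝ u) := hu.continuous_fderiv two_ne_zero
  exact hasDerivAt_firstMode (F := fun r θ => u (circleMap c r θ))
    (F' := fun r θ => fderiv ℝ u (circleMap c r θ) (cexp (θ * I))) (by fun_prop) (by fun_prop)
    (fun r θ => (hu.differentiable two_ne_zero _).hasFDerivAt.comp_hasDerivAt r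
      (hasDerivAt_circleMap_radius c r θ)) ρ

theorem hasDerivAt_firstMode_fderiv_comp_circleMap (hu : ContDiff ℝ 2 u) (ρ : ℝ) :
    HasDerivAt (fun r => firstMode fun θ => fderiv ℝ u (circleMap c r θ) (cexp (θ * I)))
      (firstMode fun θ =>
        fderiv ℝ (fderiv ℝ u) (circleMap c ρ θ) (cexp (θ * I)) (cexp (θ * I))) ρ := by
  have hDu : ContDiff ℝ 1 (fderiv ℝ u) := hu.fderiv_right le_rfl
  have hD2u : Continuous (fderiv ℝ (fderiv ℝ u)) := hDu.continuous_fderiv one_ne_zero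
  refine hasDerivAt_firstMode (F := fun r θ => fderiv ℝ u (circleMap c r θ) (cexp (θ * I)))
    (F' := fun r θ => fderiv ℝ (fderiv ℝ u) (circleMap c r θ) (cexp (θ * I)) (cexp (θ * I)))
    (by fun_prop) (by fun_prop) (fun r θ => ?_) ρ
  have := (hDu.differentiable one_ne_zero _).hasFDerivAt.comp_hasDerivAt r
      (hasDerivAt_circleMap_radius c r θ)
  simpa using this.clm_apply (hasDerivAt_const r (cexp (θ * I)))

-- the polar form `ρ² Δu = ρ² ∂ᵨ²u + ρ ∂ᵨu + ∂_θ²u` of the Laplacian at `z = c + ρe^{iθ}`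
theorem sq_mul_euclideanLap_eq_polar (hu : ContDiff ℝ 2 u) (z : ℂ) (ρ θ : ℝ) :
    ρ ^ 2 * euclideanLap u z =
      ρ ^ 2 * fderiv ℝ (fderiv ℝ u) z (cexp (θ * I)) (cexp (θ * I)) +
        ρ * fderiv ℝ u z (cexp (θ * I)) +
        (fderiv ℝ (fderiv ℝ u) z (circleMap 0 ρ θ * I) (circleMap 0 ρ θ * I) +
          fderiv ℝ u z (circleMap 0 ρ θ * I * I)) := by
  have hv : circleMap 0 ρ θ * I = ρ • (cexp (θ * I) * I) := by
    rw [circleMap_zero, real_smul, mul_assoc]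
  have hvI : circleMap 0 ρ θ * I * I = -(ρ • cexp (θ * I)) := by
    rw [hv, smul_mul_assoc, mul_assoc, I_mul_I, mul_neg_one, smul_neg]
  rw [hvI, hv, euclideanLap_eq_fderiv_fderiv hu,
    ← bilin_exp_add_bilin_exp_mul_I (fderiv ℝ (fderiv ℝ u) z) θ]
  simp only [map_neg, map_smul, smul_apply, smul_eq_mul]
  ring

theorem sq_smul_firstMode_euclideanLap (hu : ContDiff ℝ 2 u) (ρ : ℝ) :
    ρ ^ 2 • (firstMode fun θ => euclideanLap u (circleMap c ρ θ)) =
      ρ ^ 2 • (firstMode fun θ =>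
          fderiv ℝ (fderiv ℝ u) (circleMap c ρ θ) (cexp (θ * I)) (cexp (θ * I))) +
        ρ • (firstMode fun θ => fderiv ℝ u (circleMap c ρ θ) (cexp (θ * I))) -
        firstMode fun θ => u (circleMap c ρ θ) := by
  have hDu : ContDiff ℝ 1 (fderiv ℝ u) := hu.fderiv_right le_rfl
  have hD2u : Continuous (fderiv ℝ (fderiv ℝ u)) := hDu.continuous_fderiv one_ne_zero
  have hD1u : Continuous (fderiv ℝ u) := hDu.continuous
  have hF : ∀ θ, HasDerivAt (fun θ => u (circleMap c ρ θ))
      (fderiv ℝ u (circleMap c ρ θ) (circleMap 0 ρ θ * I)) θ := fun θ =>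
    (hu.differentiable two_ne_zero _).hasFDerivAt.comp_hasDerivAt θ (hasDerivAt_circleMap c ρ θ)
  have hF' : ∀ θ, HasDerivAt (fun θ => fderiv ℝ u (circleMap c ρ θ) (circleMap 0 ρ θ * I))
      (fderiv ℝ (fderiv ℝ u) (circleMap c ρ θ) (circleMap 0 ρ θ * I) (circleMap 0 ρ θ * I) +
        fderiv ℝ u (circleMap c ρ θ) (circleMap 0 ρ θ * I * I)) θ := fun θ =>
    ((hDu.differentiable one_ne_zero _).hasFDerivAt.comp_hasDerivAt θ
      (hasDerivAt_circleMap c ρ θ)).clm_apply ((hasDerivAt_circleMap 0 ρ θ).mul_const I)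
  have hangular := firstMode_eq_neg_of_hasDerivAt hF hF' (by fun_prop)
    (fun θ => by simp only [periodic_circleMap c ρ θ])
    (fun θ => by simp only [periodic_circleMap c ρ θ, periodic_circleMap 0 ρ θ])
  rw [← firstMode_const_mul, funext fun θ => sq_mul_euclideanLap_eq_polar hu (circleMap c ρ θ) ρ θ,
    firstMode_add (by fun_prop) (by fun_prop), firstMode_add (by fun_prop) (by fun_prop),
    firstMode_const_mul, firstMode_const_mul, hangular, sub_eq_add_neg]

end CircleModes

section EulerEquation

variable {E : Type*} [NormedAddCommGroup E] [NormedSpace ℝ E] {g g₁ g₂ f : ℝ → E} {R M : ℝ}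

theorem norm_sq_smul_sub_smul_le_of_euler (hg : ∀ ρ, HasDerivAt g (g₁ ρ) ρ)
    (hg₁ : ∀ ρ, HasDerivAt g₁ (g₂ ρ) ρ)
    (heuler : ∀ ρ, ρ ^ 2 • f ρ = ρ ^ 2 • g₂ ρ + ρ • g₁ ρ - g ρ)
    (hf : ∀ ρ ∈ Set.Icc 0 R, ‖f ρ‖ ≤ M) {ρ : ℝ} (hρ : ρ ∈ Set.Icc 0 R) :
    ‖ρ ^ 2 • g₁ ρ - ρ • g ρ‖ ≤ M * ρ ^ 3 / 3 := by
  have hderiv : ∀ ρ, HasDerivAt (fun ρ => ρ ^ 2 • g₁ ρ - ρ • g ρ) (ρ ^ 2 • f ρ) ρ := by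
    intro ρ
    refine (((hasDerivAt_pow 2 ρ).smul (hg₁ ρ)).sub ((hasDerivAt_id ρ).smul (hg ρ))).congr_deriv ?_
    rw [heuler]
    simp only [id, Nat.cast_ofNat, one_smul]
    module
  have hB : ∀ ρ, HasDerivAt (fun ρ => M * ρ ^ 3 / 3) (M * ρ ^ 2) ρ := by
    intro ρ
    refine (((hasDerivAt_pow 3 ρ).const_mul M).div_const 3).congr_deriv ?_
    ring
  refine image_norm_le_of_norm_deriv_right_le_deriv_boundary
    (fun ρ _ => (hderiv ρ).continuousAt.continuousWithinAt) (fun ρ _ => (hderiv ρ).hasDerivWithinAt)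
    (by simp) hB (fun ρ hρ => ?_) hρ
  rw [norm_smul, Real.norm_of_nonneg (by positivity), mul_comm]
  exact mul_le_mul_of_nonneg_right (hf ρ (Set.Ico_subset_Icc_self hρ)) (by positivity)

theorem norm_deriv_zero_sub_inv_smul_le_of_euler (hg : ∀ ρ, HasDerivAt g (g₁ ρ) ρ)
    (hg₁ : ∀ ρ, HasDerivAt g₁ (g₂ ρ) ρ)
    (heuler : ∀ ρ, ρ ^ 2 • f ρ = ρ ^ 2 • g₂ ρ + ρ • g₁ ρ - g ρ)
    (hf : ∀ ρ ∈ Set.Icc 0 R, ‖f ρ‖ ≤ M) (hg0 : g 0 = 0) (hR : 0 < R) :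
    ‖g₁ 0 - R⁻¹ • g R‖ ≤ M * R / 3 := by
  have hslope : ∀ ρ ∈ Set.Ioc 0 R, HasDerivWithinAt (fun ρ => ρ⁻¹ • g ρ)
      ((ρ ^ 3)⁻¹ • (ρ ^ 2 • g₁ ρ - ρ • g ρ)) (Set.Ioc 0 R) ρ := by
    intro ρ hρ
    have hρ0 : ρ ≠ 0 := hρ.1.ne'
    refine ((hasDerivAt_inv hρ0).smul (hg ρ)).hasDerivWithinAt.congr_deriv ?_
    rw [smul_sub, smul_smul, smul_smul, neg_smul, ← sub_eq_add_neg]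
    congr 2 <;> field_simp
  have hbound : ∀ ρ ∈ Set.Ioc 0 R, ‖(ρ ^ 3)⁻¹ • (ρ ^ 2 • g₁ ρ - ρ • g ρ)‖ ≤ M / 3 := by
    intro ρ hρ
    have hρ0 := hρ.1
    have hm := norm_sq_smul_sub_smul_le_of_euler hg hg₁ heuler hf ⟨hρ0.le, hρ.2⟩
    rw [norm_smul, norm_inv, Real.norm_of_nonneg (by positivity), inv_mul_le_iff₀ (by positivity)]
    linarith
  have hlip : ∀ ε ∈ Set.Ioc 0 R, ‖R⁻¹ • g R - ε⁻¹ • g ε‖ ≤ M * R / 3 := by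
    intro ε hε
    have hM : 0 ≤ M := (norm_nonneg _).trans (hf 0 ⟨le_rfl, hR.le⟩)
    have := (convex_Ioc 0 R).norm_image_sub_le_of_norm_hasDerivWithin_le hslope hbound hε
      ⟨hR, le_rfl⟩
    rw [Real.norm_of_nonneg (by linarith [hε.2])] at this
    nlinarith [hε.1]
  have hlim : Filter.Tendsto (fun ε => ε⁻¹ • g ε) (nhdsWithin 0 (Set.Ioi 0)) (nhds (g₁ 0)) := by
    refine ((hasDerivAt_iff_tendsto_slope.1 (hg 0)).mono_left
      (nhdsWithin_mono _ fun ε hε => ne_of_gt hε)).congr fun ε => ?_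
    simp [slope_def_module, hg0]
  rw [norm_sub_rev]
  refine le_of_tendsto ((tendsto_const_nhds.sub hlim).norm) ?_
  filter_upwards [Ioc_mem_nhdsGT hR] with ε hε using hlip ε hε

end EulerEquation

theorem norm_fderiv_le_of_abs_le_of_abs_euclideanLap_le {u : ℂ → ℝ} {c : ℂ} {R A B : ℝ}
    (hu : ContDiff ℝ 2 u) (hR : 0 < R) (hA : ∀ z ∈ closedBall c R, |u z| ≤ A)
    (hB : ∀ z ∈ closedBall c R, |euclideanLap u z| ≤ B) :
    ‖fderiv ℝ u c‖ ≤ 2 * A / R + 2 * B * R / 3 := by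
  have hcircle : ∀ {ρ} θ, ρ ∈ Set.Icc 0 R → circleMap c ρ θ ∈ closedBall c R := fun θ hρ =>
    closedBall_subset_closedBall hρ.2 (circleMap_mem_closedBall c hρ.1 θ)
  have key := norm_deriv_zero_sub_inv_smul_le_of_euler
    (hasDerivAt_firstMode_comp_circleMap c hu) (hasDerivAt_firstMode_fderiv_comp_circleMap c hu)
    (sq_smul_firstMode_euclideanLap c hu)
    (fun ρ hρ => norm_firstMode_le fun θ => hB _ (hcircle θ hρ))
    (by simp [circleMap_zero_radius, firstMode_const]) hR
  have hgR : ‖R⁻¹ • firstMode fun θ => u (circleMap c R θ)‖ ≤ 2 * π * A / R := by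
    rw [norm_smul, norm_inv, Real.norm_of_nonneg hR.le, inv_mul_le_iff₀ hR,
      mul_div_cancel₀ _ hR.ne']
    exact norm_firstMode_le fun θ => hA _ (hcircle θ ⟨hR.le, le_rfl⟩)
  have hπ : π * ‖fderiv ℝ u c‖ ≤ π * (2 * A / R + 2 * B * R / 3) := by
    rw [← norm_firstMode_clm_exp]
    simp only [circleMap_zero_radius, const_apply] at key
    calc _ ≤ _ := norm_le_insert' _ _
      _ ≤ _ := add_le_add hgR key
      _ = _ := by ring
  exact le_of_mul_le_mul_left hπ Real.pi_pos

theorem abs_sinh_le_cosh_mul_abs {x c : ℝ} (hx : |x| ≤ c) : |Real.sinh x| ≤ Real.cosh c * |x| := by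
  have hderiv : ∀ y ∈ Set.Icc (-c) c,
      HasDerivWithinAt Real.sinh (Real.cosh y) (Set.Icc (-c) c) y :=
    fun y _ => (Real.hasDerivAt_sinh y).hasDerivWithinAt
  have hc : 0 ≤ c := (abs_nonneg x).trans hx
  have hbound : ∀ y ∈ Set.Icc (-c) c, ‖Real.cosh y‖ ≤ Real.cosh c := fun y hy => by
    rw [Real.norm_of_nonneg (Real.cosh_pos y).le, Real.cosh_le_cosh, abs_of_nonneg hc]
    exact abs_le.2 hy
  simpa using (convex_Icc (-c) c).norm_image_sub_le_of_norm_hasDerivWithin_le hderiv hbound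
    ⟨neg_nonpos.2 hc, hc⟩ (abs_le.1 hx)

theorem div_cosh_lt_two_mul_exp_neg {K : ℝ} (hK : 0 < K) (x : ℝ) :
    K / Real.cosh x < 2 * K * Real.exp (-x) := by
  rw [div_lt_iff₀ (Real.cosh_pos x), Real.cosh_eq]
  have hpos := Real.exp_pos (-x)
  have hinv : Real.exp (-x) * Real.exp x = 1 := by
    rw [← Real.exp_add, neg_add_cancel, Real.exp_zero]
  nlinarith [mul_pos hK (mul_pos hpos hpos)]

theorem sub_le_infDist_of_mem_closedBall {α : Type*} [PseudoMetricSpace α] {s : Set α} {x y : α}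
    {r : ℝ} (hy : y ∈ closedBall x r) : infDist x s - r ≤ infDist y s := by
  linarith [infDist_le_infDist_add_dist (s := s) (x := x) (y := y), mem_closedBall'.1 hy]

theorem mem_and_abs_le_of_mem_closedBall {Ω : Set ℂ} {ω : ℂ → ℝ} {K₀ : ℝ} (hK₀ : 0 ≤ K₀)
    (hbound : ∀ w ∈ Ω, 1 < infDist w Ωᶜ → |ω w| ≤ K₀ / Real.cosh (infDist w Ωᶜ)) {w₀ z : ℂ}
    (hd : 2 < infDist w₀ Ωᶜ) (hz : z ∈ closedBall w₀ 1) :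
    z ∈ Ω ∧ |ω z| ≤ K₀ / Real.cosh (infDist w₀ Ωᶜ - 1) := by
  have hdz := sub_le_infDist_of_mem_closedBall (s := Ωᶜ) hz
  have hzΩ : z ∈ Ω := not_not.1 fun hzΩ => by
    linarith [infDist_zero_of_mem (show z ∈ Ωᶜ from hzΩ)]
  refine ⟨hzΩ, (hbound z hzΩ (by linarith)).trans
    (div_le_div_of_nonneg_left hK₀ (Real.cosh_pos _) ?_)⟩
  rwa [Real.cosh_le_cosh, abs_of_nonneg (by linarith), abs_of_nonneg (by linarith)]

theorem gradient_decay_of_sinh_gordon_general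
    (Ω : Set ℂ) (ω : ℂ → ℝ) (K₀ : ℝ) (hK₀ : 0 < K₀)
    (hC2 : ContDiff ℝ 2 ω)
    (hpde : ∀ w ∈ Ω, euclideanLap ω w = 2 * Real.sinh (2 * ω w))
    (hbound : ∀ w ∈ Ω, 1 < infDist w Ωᶜ → |ω w| ≤ K₀ / Real.cosh (infDist w Ωᶜ)) :
    ∃ δ : ℝ, 0 < δ ∧ ∀ w₀ ∈ Ω, 2 < infDist w₀ Ωᶜ →
      ‖fderiv ℝ ω w₀‖ < δ * Real.exp (-infDist w₀ Ωᶜ) := by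
  set C := 2 + 8 * Real.cosh (2 * K₀) / 3
  refine ⟨2 * Real.exp 1 * K₀ * C, by positivity, fun w₀ _ hd => ?_⟩
  set A := K₀ / Real.cosh (infDist w₀ Ωᶜ - 1)
  have hA := fun z (hz : z ∈ closedBall w₀ 1) =>
    mem_and_abs_le_of_mem_closedBall hK₀.le hbound hd hz
  have hAK : A ≤ K₀ := div_le_self hK₀.le (Real.one_le_cosh _)
  have hB : ∀ z ∈ closedBall w₀ 1, |euclideanLap ω z| ≤ 4 * Real.cosh (2 * K₀) * A := by
    intro z hz
    obtain ⟨hzΩ, hωz⟩ := hA z hz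
    have h2ω : |2 * ω z| ≤ 2 * K₀ := by rw [abs_mul, abs_two]; linarith
    calc |euclideanLap ω z| = 2 * |Real.sinh (2 * ω z)| := by rw [hpde z hzΩ, abs_mul, abs_two]
      _ ≤ 2 * (Real.cosh (2 * K₀) * |2 * ω z|) := by gcongr; exact abs_sinh_le_cosh_mul_abs h2ω
      _ ≤ 4 * Real.cosh (2 * K₀) * A := by
        rw [abs_mul, abs_two]; nlinarith [Real.cosh_pos (2 * K₀)]
  calc ‖fderiv ℝ ω w₀‖ ≤ 2 * A / 1 + 2 * (4 * Real.cosh (2 * K₀) * A) * 1 / 3 :=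
        norm_fderiv_le_of_abs_le_of_abs_euclideanLap_le hC2 one_pos (fun z hz => (hA z hz).2) hB
    _ = C * A := by ring
    _ < C * (2 * K₀ * Real.exp (-(infDist w₀ Ωᶜ - 1))) :=
        mul_lt_mul_of_pos_left (div_cosh_lt_two_mul_exp_neg hK₀ _) (by positivity)
    _ = 2 * Real.exp 1 * K₀ * C * Real.exp (-infDist w₀ Ωᶜ) := by
        rw [neg_sub, sub_eq_add_neg, Real.exp_add]; ring

/-- Let `ω` be a `C²` function on a domain `Ω ⊂ ℝ² ≅ ℂ` satisfying `Δω = 2 sinh(2ω)`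
on `Ω`, and suppose `|ω(w)| ≤ K₀ / cosh (d(w))` whenever `d(w) > 1`, where `d(w)` is the
Euclidean distance from `w` to `∂Ω`.  Then there is a constant `δ > 0` such that
`|∇ω(w₀)| < δ e^{-d(w₀)}` for every `w₀ ∈ Ω` with `d(w₀) > 2`. -/
theorem gradient_decay_of_sinh_gordon
    (Ω : Set ℂ) (hΩ : IsOpen Ω) (ω : ℂ → ℝ) (K₀ : ℝ) (hK₀ : 0 < K₀)
    (hC2 : ContDiff ℝ 2 ω)
    (hpde : ∀ w ∈ Ω, euclideanLap ω w = 2 * Real.sinh (2 * ω w))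
    (hbound : ∀ w ∈ Ω, 1 < infDist w Ωᶜ → |ω w| ≤ K₀ / Real.cosh (infDist w Ωᶜ)) :
    ∃ δ : ℝ, 0 < δ ∧ ∀ w₀ ∈ Ω, 2 < infDist w₀ Ωᶜ →
      ‖fderiv ℝ ω w₀‖ < δ * Real.exp (-infDist w₀ Ωᶜ) :=
  gradient_decay_of_sinh_gordon_general Ω ω K₀ hK₀ hC2 hpde hbound
end

section
/- In the unit disk model of ℍ² with metric λ(z)²|dz|², λ(z) = 2/(1-|z|²), let c : [0,∞) → ℍ² be a unit-speed curve with c(t) → 0 and with the angle α(t) between c'(t) and the radial direction toward 0 tending to 0. Writing c(t) in polar coordinates with radius r(t) = |c(t)|, one has r'(t) → -1/2; consequently r(t) → -∞ along a divergent parameter, a contradiction, so no such curve exists. -/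
/-! Differentiating `r = ‖c‖` gives `r' = ⟪c, c'⟫ / r = -‖c'‖ cos α`. Unit speed in the disk
model means `‖c'‖ = (1 - r²) / 2`, which tends to `1/2` since `c → 0`; together with `α → 0`
this forces `r' → -1/2`, so by the mean value theorem `r → -∞`, impossible for a norm. -/

open Filter

/-- Nonoriented angle between two vectors of `ℂ ≅ ℝ²` (via the real inner product
`⟪x, y⟫ = Re (x * conj y)`). -/
noncomputable def angleBetween (x y : ℂ) : ℝ :=
  Real.arccos ((x * (starRingEnd ℂ) y).re / (‖x‖ * ‖y‖))

open Topology InnerProductGeometry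
open scoped RealInnerProductSpace

theorem angleBetween_eq_angle (x y : ℂ) : angleBetween x y = angle x y := by
  rw [angleBetween, angle, Complex.inner, ← Complex.conj_re, map_mul, Complex.conj_conj,
    mul_comm]

section NormDeriv

variable {F : Type*} [NormedAddCommGroup F] [InnerProductSpace ℝ F]

theorem HasDerivAt.norm_of_ne_zero {f : ℝ → F} {f' : F} {t : ℝ} (hf : HasDerivAt f f' t)
    (h0 : f t ≠ 0) : HasDerivAt (‖f ·‖) (⟪f t, f'⟫ / ‖f t‖) t := by
  have h := hf.norm_sq.sqrt (by positivity)
  simp only [Real.sqrt_sq (norm_nonneg _)] at h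
  convert h using 1
  ring

theorem inner_div_norm_eq_neg_norm_mul_cos_angle {x : F} (hx : x ≠ 0) (v : F) :
    ⟪x, v⟫ / ‖x‖ = -(‖v‖ * Real.cos (angle v (-x))) := by
  have h := cos_angle_mul_norm_mul_norm v (-x)
  rw [inner_neg_right, real_inner_comm, norm_neg] at h
  field_simp
  linarith

theorem tendsto_deriv_norm_of_tendsto_angle {f : ℝ → F}
    (hf : ∀ᶠ t in atTop, DifferentiableAt ℝ f t) (h0 : ∀ᶠ t in atTop, f t ≠ 0) {v : ℝ}
    (hspeed : Tendsto (‖deriv f ·‖) atTop (𝓝 v))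
    (hangle : Tendsto (fun t => angle (deriv f t) (-f t)) atTop (𝓝 0)) :
    Tendsto (fun t => deriv (‖f ·‖) t) atTop (𝓝 (-v)) := by
  have h := (hspeed.mul ((Real.continuous_cos.tendsto 0).comp hangle)).neg
  rw [Real.cos_zero, mul_one] at h
  refine h.congr' ?_
  filter_upwards [hf, h0] with t hft h0t
  rw [(hft.hasDerivAt.norm_of_ne_zero h0t).deriv,
    inner_div_norm_eq_neg_norm_mul_cos_angle h0t]
  rfl

end NormDeriv

theorem tendsto_atBot_of_tendsto_deriv_neg {g : ℝ → ℝ}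
    (hg : ∀ᶠ t in atTop, DifferentiableAt ℝ g t) {L : ℝ} (hL : L < 0)
    (h : Tendsto (deriv g) atTop (𝓝 L)) : Tendsto g atTop atBot := by
  obtain ⟨T, hT⟩ :=
    (hg.and (h.eventually_le_const (show L < L / 2 by linarith))).exists_forall_of_atTop
  have hslope : ∀ t ≥ T, g t - g T ≤ L / 2 * (t - T) := fun t ht =>
    (convex_Ici T).image_sub_le_mul_sub_of_deriv_le
      (fun x hx => (hT x hx).1.continuousAt.continuousWithinAt)
      (fun x hx => (hT x (interior_subset hx)).1.differentiableWithinAt)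
      (fun x hx => (hT x (interior_subset hx)).2) T Set.self_mem_Ici t ht ht
  have hline : Tendsto (fun t => g T + L / 2 * (t - T)) atTop atBot :=
    tendsto_atBot_add_const_left _ _
      ((tendsto_atTop_add_const_right _ (-T) tendsto_id).const_mul_atTop_of_neg (by linarith))
  refine tendsto_atBot_mono' _ ?_ hline
  filter_upwards [eventually_ge_atTop T] with t ht
  linarith [hslope t ht]

theorem eq_div_two_of_two_div_mul_eq_one {a s : ℝ} (h : 2 / a * s = 1) : s = a / 2 := by
  have ha : a ≠ 0 := by
    rintro rfl
    simp at h
  field_simp at h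
  linarith

theorem no_unit_speed_curve_converging_radially_to_center_general
    (c : ℝ → ℂ) (hC1 : ContDiff ℝ 1 c)
    (hne : ∀ t : ℝ, 0 ≤ t → c t ≠ 0)
    (hunit : ∀ t : ℝ, 0 ≤ t →
      2 / (1 - ‖c t‖ ^ 2) * ‖deriv c t‖ = 1)
    (hlim : Tendsto c atTop (nhds 0))
    (hangle : Tendsto (fun t => angleBetween (deriv c t) (-(c t))) atTop (nhds 0)) :
    Tendsto (fun t => deriv (fun s => ‖c s‖) t) atTop (nhds (-(1 / 2)))
      ∧ False := by
  have hdiff : Differentiable ℝ c := hC1.differentiable one_ne_zero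
  have hne_atTop : ∀ᶠ t in atTop, c t ≠ 0 := (eventually_ge_atTop 0).mono hne
  have hspeed : Tendsto (‖deriv c ·‖) atTop (𝓝 (1 / 2)) := by
    have h := ((hlim.norm.pow 2).const_sub 1).div_const 2
    rw [norm_zero, zero_pow two_ne_zero, sub_zero] at h
    refine h.congr' ?_
    filter_upwards [eventually_ge_atTop 0] with t ht
    exact (eq_div_two_of_two_div_mul_eq_one (hunit t ht)).symm
  have hradial : Tendsto (fun t => deriv (‖c ·‖) t) atTop (𝓝 (-(1 / 2))) :=
    tendsto_deriv_norm_of_tendsto_angle (.of_forall hdiff) hne_atTop hspeed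
      (by simpa only [angleBetween_eq_angle] using hangle)
  have hnorm_diff : ∀ᶠ t in atTop, DifferentiableAt ℝ (‖c ·‖) t :=
    hne_atTop.mono fun t h0 => (hdiff t).norm ℝ h0
  exact ⟨hradial, not_tendsto_nhds_of_tendsto_atBot
    (tendsto_atBot_of_tendsto_deriv_neg hnorm_diff (by norm_num) hradial) _ hlim.norm⟩

/-- In the unit disk model of `ℍ²` with metric `λ(z)²|dz|²`, `λ(z) = 2/(1-|z|²)`, let
`c : [0,∞) → ℍ²` be a unit-speed `C¹` curve with `c(t) → 0` and with the angle `α(t)`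
between `c'(t)` and the radial direction toward `0` tending to `0`.  Writing
`r(t) = |c(t)|`, one has `r'(t) → -1/2`; consequently `r(t) → -∞` along a divergent
parameter, a contradiction — no such curve exists. -/
theorem no_unit_speed_curve_converging_radially_to_center
    (c : ℝ → ℂ) (hC1 : ContDiff ℝ 1 c)
    (hmem : ∀ t : ℝ, 0 ≤ t → ‖c t‖ < 1)
    (hne : ∀ t : ℝ, 0 ≤ t → c t ≠ 0)
    (hunit : ∀ t : ℝ, 0 ≤ t →
      2 / (1 - ‖c t‖ ^ 2) * ‖deriv c t‖ = 1)
    (hlim : Tendsto c atTop (nhds 0))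
    (hangle : Tendsto (fun t => angleBetween (deriv c t) (-(c t))) atTop (nhds 0)) :
    Tendsto (fun t => deriv (fun s => ‖c s‖) t) atTop (nhds (-(1 / 2)))
      ∧ False :=
  no_unit_speed_curve_converging_radially_to_center_general c hC1 hne hunit hlim hangle
end
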